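/- arXiv:1409.6006 — 4 statements merged into one kernel-verified Lean document; each statement's English description precedes it below -/
import Mathlib

section
/- Let $K$ be a field, $L/K$ a field extension, and $f_0, f_1, \ldots, f_s \in K[[Z]]$ formal power series that are algebraically independent over $L$. If $P \in L[X_0, \ldots, X_s]$ satisfies $P(f_0, \ldots, f_s) \in K[[Z]]$, then $P \in K[X_0, \ldots, X_s]$. -/
/-!
Choose a `K`-linear retraction `π : L → K` of `K → L` and apply it to the coefficients of `P`,
obtaining `P₀` over `K`. Since the power series `f^d` have coefficients in `K` and `π` is
`K`-linear, `P₀(f)` is `π` applied coefficientwise to `P(f)`, which is the given series over `K`.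
So `P` and `P₀` take the same value at `f`, and algebraic independence gives `P = P₀`.
-/

open MvPolynomial

theorem MvPolynomial.coeff_aeval_addMonoidAlgebraMap {R S σ : Type*} [CommRing R] [CommRing S]
    [Algebra R S] (π : S →ₗ[R] R) (f : σ → PowerSeries R) (P : MvPolynomial σ S) (n : ℕ) :
    PowerSeries.coeff n (aeval f (AddMonoidAlgebra.map (π : S →+ R) P)) =
      π (PowerSeries.coeff n (aeval (fun i ↦ PowerSeries.map (algebraMap R S) (f i)) P)) := by
  induction P using MvPolynomial.induction_on' with
  | monomial d c =>
    have hprod : (d.prod fun i k ↦ PowerSeries.map (algebraMap R S) (f i) ^ k) =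
        PowerSeries.map (algebraMap R S) (d.prod fun i k ↦ f i ^ k) := by
      simp [Finsupp.prod, map_prod]
    rw [show AddMonoidAlgebra.map (π : S →+ R) (monomial d c) = monomial d (π c) from
      AddMonoidAlgebra.map_single _ _ _, aeval_monomial, aeval_monomial, hprod]
    simp only [PowerSeries.algebraMap_eq, PowerSeries.coeff_C_mul, PowerSeries.coeff_map]
    rw [mul_comm c, ← Algebra.smul_def, map_smul, smul_eq_mul, mul_comm]
  | add p q hp hq =>
    simp only [AddMonoidAlgebra.map_add, map_add, hp, hq]

/-- if `f_0, …, f_s ∈ K[[Z]]` are algebraically independent over a field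
extension `L` of `K`, and `P ∈ L[X_0, …, X_s]` is such that `P(f_0, …, f_s)` has all of
its coefficients in `K`, then `P` has all of its coefficients in `K`. -/
theorem statement3
    (K L : Type*) [Field K] [Field L] [Algebra K L]
    (s : ℕ) (f : Fin (s + 1) → PowerSeries K)
    (hind : AlgebraicIndependent L (fun i => PowerSeries.map (algebraMap K L) (f i)))
    (P : MvPolynomial (Fin (s + 1)) L)
    (hP : MvPolynomial.aeval (fun i => PowerSeries.map (algebraMap K L) (f i)) P ∈
      Set.range (PowerSeries.map (algebraMap K L))) :
    P ∈ Set.range (MvPolynomial.map (algebraMap K L)) := by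
  obtain ⟨g, hg⟩ := hP
  obtain ⟨π, hπ⟩ := (Algebra.linearMap K L).exists_leftInverse_of_injective
    (LinearMap.ker_eq_bot.mpr (algebraMap K L).injective)
  set P₀ := AddMonoidAlgebra.map (π : L →+ K) P
  have hP₀ : aeval f P₀ = g := by
    ext n
    rw [coeff_aeval_addMonoidAlgebraMap, ← hg, PowerSeries.coeff_map]
    exact LinearMap.congr_fun hπ _
  refine ⟨P₀, hind ?_⟩
  calc aeval (fun i ↦ PowerSeries.map (algebraMap K L) (f i)) (map (algebraMap K L) P₀)
      = aeval (fun i ↦ PowerSeries.map (algebraMap K L) (f i)) P₀ := aeval_map_algebraMap _ _ _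
    _ = PowerSeries.map (algebraMap K L) (aeval f P₀) := (map_aeval _ _ _).symm
    _ = aeval (fun i ↦ PowerSeries.map (algebraMap K L) (f i)) P := by rw [hP₀, hg]
end

section
/- Let $q$ be a prime power and let $A^+(j)$ be the set of monic polynomials of degree $j$ in $\mathbb{F}_q[x]$. Then $\sum_{a \in A^+(j)} a(x)^{-1} = \ell_j(x)^{-1}$ in $\mathbb{F}_q(x)$, where $\ell_j(x) = \prod_{k=1}^{j}(x - x^{q^k})$ and $\ell_0(x) = 1$ (Carlitz's identity (9.09)). -/
noncomputable section

open Polynomial Finset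

/-- The indeterminate `x` of `𝔽_q(x)`. -/
def xr (Fq : Type*) [Field Fq] : RatFunc Fq :=
  algebraMap (Polynomial Fq) (RatFunc Fq) X

/-- `ℓ_j(x) = ∏_{k=1}^{j} (x - x^{q^k})`, with `ℓ_0(x) = 1`, in `𝔽_q(x)`. -/
def ellr (Fq : Type*) [Field Fq] (q j : ℕ) : RatFunc Fq :=
  ∏ k ∈ Finset.Icc 1 j, (xr Fq - xr Fq ^ q ^ k)

/-- The monic polynomial of degree `j` with lower-order coefficients `c : Fin j → 𝔽_q`;
these parametrize the set `A⁺(j)` of monic polynomials of degree exactly `j`. -/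
def monicOf (Fq : Type*) [Field Fq] (j : ℕ) (c : Fin j → Fq) : Polynomial Fq :=
  X ^ j + ∑ i : Fin j, C (c i) * X ^ (i : ℕ)

/-!
Write `q = #𝔽_q`. Summing over the constant term of a monic polynomial uses
`∑_{c ∈ 𝔽_q} 1/(t + c s) = s^(q-1) / (s^(q-1) t - t^q)`, the logarithmic derivative of
`X^q - X = ∏_{c ∈ 𝔽_q} (X - c)`. To iterate it, introduce the `𝔽_q`-linear maps `E_0 = id`,
`E_{k+1}(t) = E_k(x^k)^(q-1) E_k(t) - E_k(t)^q`: the identity turns `∑_c 1/E_k(x^k (x a + c))`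
into `E_k(x^k)^(q-1) / E_{k+1}(x^(k+1) a)`, so induction on the degree, together with
`E_{k+1}(x^(k+1)) = (x - x^(q^(k+1))) E_k(x^k)^q`, gives
`∑_{a monic, deg a = j} 1/E_k(x^k a) = 1/(E_k(x^k) ∏_{k < i ≤ k+j} (x - x^(q^i)))`; take `k = 0`.
For transcendental `x`, `E_k(a(x)) ≠ 0` when `deg a ≥ k`: a zero of `E_{k+1}` at `a` forces
`E_k(a)/E_k(x^k) = c ∈ 𝔽_q`, i.e. `E_k(a - c x^k) = 0`.
-/

theorem div_sub_div_pow {K : Type*} [Field K] {n : ℕ} (hn : n ≠ 0) {s : K} (hs : s ≠ 0) (t : K) :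
    t / s - (t / s) ^ n = (s ^ (n - 1) * t - t ^ n) / s ^ n := by
  rw [div_pow, ← pow_sub_one_mul hn s]; field_simp

namespace FiniteField

variable (Fq : Type*) [Field Fq] [Fintype Fq]

theorem splits_X_pow_card_sub_X' : (X ^ Fintype.card Fq - X : Fq[X]).Splits := by
  rw [splits_iff_card_roots, roots_X_pow_card_sub_X,
    X_pow_card_sub_X_natDegree_eq Fq Fintype.one_lt_card]
  rfl

theorem derivative_X_pow_card_sub_X : derivative (X ^ Fintype.card Fq - X : Fq[X]) = -1 := by
  rw [derivative_sub, derivative_X_pow, derivative_X, cast_card_eq_zero, C_0, zero_mul, zero_sub]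

variable {Fq} {L : Type*}

theorem mem_range_of_pow_card_eq_self [CommRing L] [IsDomain L] [Algebra Fq L] {y : L}
    (hy : y ^ Fintype.card Fq = y) : y ∈ (algebraMap Fq L).range :=
  (splits_X_pow_card_sub_X' Fq).mem_range_of_isRoot
    (X_pow_card_sub_X_ne_zero Fq Fintype.one_lt_card) (by simp [hy])

theorem sum_inv_sub_algebraMap [Field L] [Algebra Fq L] {y : L}
    (hy : y ^ Fintype.card Fq ≠ y) :
    ∑ c : Fq, (y - algebraMap Fq L c)⁻¹ = (y - y ^ Fintype.card Fq)⁻¹ := by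
  set f := (X ^ Fintype.card Fq - X : Fq[X]).map (algebraMap Fq L)
  have hf : f.eval y ≠ 0 := by simpa [f, sub_eq_zero] using hy
  have key := ((splits_X_pow_card_sub_X' Fq).map _).eval_derivative_div_eval_of_ne_zero hf
  rw [(splits_X_pow_card_sub_X' Fq).roots_map, roots_X_pow_card_sub_X, derivative_map,
    derivative_X_pow_card_sub_X] at key
  simp only [Polynomial.map_neg, Polynomial.map_one, eval_neg, eval_one, eval_map_algebraMap,
    map_sub, map_pow, aeval_X, Multiset.map_map, one_div] at key
  rw [← neg_sub, inv_neg, ← one_div, ← neg_div, key]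
  rfl

theorem sum_inv_add_smul [Field L] [Algebra Fq L] {s t : L} (hs : s ≠ 0)
    (hst : s ^ (Fintype.card Fq - 1) * t - t ^ Fintype.card Fq ≠ 0) :
    ∑ c : Fq, (t + c • s)⁻¹ =
      s ^ (Fintype.card Fq - 1) * (s ^ (Fintype.card Fq - 1) * t - t ^ Fintype.card Fq)⁻¹ := by
  have hdiv := div_sub_div_pow (Fintype.card_ne_zero (α := Fq)) hs t
  have hy : (t / s) ^ Fintype.card Fq ≠ t / s := by
    rw [ne_comm, ← sub_ne_zero, hdiv]; exact div_ne_zero hst (pow_ne_zero _ hs)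
  calc ∑ c : Fq, (t + c • s)⁻¹ = ∑ c : Fq, (t + (-c) • s)⁻¹ :=
        (Equiv.sum_comp (Equiv.neg Fq) fun c => (t + c • s)⁻¹).symm
    _ = s⁻¹ * ∑ c : Fq, (t / s - algebraMap Fq L c)⁻¹ := by
      rw [mul_sum]; refine sum_congr rfl fun c _ => ?_
      rw [neg_smul, Algebra.smul_def, ← mul_inv, mul_sub, mul_div_cancel₀ _ hs, mul_comm s,
        sub_eq_add_neg]
    _ = _ := by
      rw [sum_inv_sub_algebraMap hy, hdiv, inv_div, ← pow_sub_one_mul Fintype.card_ne_zero s]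
      field_simp

end FiniteField

theorem monicOf_monic {Fq : Type*} [Field Fq] (j : ℕ) (c : Fin j → Fq) : (monicOf Fq j c).Monic :=
  monic_X_pow_add (degree_sum_fin_lt c)

theorem monicOf_succ_cons {Fq : Type*} [Field Fq] (j : ℕ) (e : Fq) (c : Fin j → Fq) :
    monicOf Fq (j + 1) (Fin.cons e c) = X * monicOf Fq j c + C e := by
  simp only [monicOf, Fin.sum_univ_succ, Fin.cons_zero, Fin.cons_succ, Fin.val_zero, Fin.val_succ,
    pow_zero, mul_one, mul_add, mul_sum, pow_succ', mul_left_comm (C _) X]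
  ring

section CarlitzE

variable (Fq : Type*) [Field Fq] [Fintype Fq] {L : Type*}

/-- Up to sign, `carlitzE Fq x k t` is Carlitz's `ψ_k(t) = ∏_{deg b < k} (t - b(x))`; the recursion
mirrors `∏_{c : 𝔽_q} (A + c B) = A ^ q - B ^ (q - 1) * A`. -/
def carlitzE [CommRing L] [Algebra Fq L] (x : L) : ℕ → L →ₗ[Fq] L
  | 0 => LinearMap.id
  | k + 1 => carlitzE x k (x ^ k) ^ (Fintype.card Fq - 1) • carlitzE x k
      - (FiniteField.frobeniusAlgHom Fq L).toLinearMap ∘ₗ carlitzE x k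

variable {Fq}

section CommRing

variable [CommRing L] [Algebra Fq L] (x : L)

@[simp]
theorem carlitzE_zero_apply (t : L) : carlitzE Fq x 0 t = t := rfl

theorem carlitzE_succ_apply (k : ℕ) (t : L) :
    carlitzE Fq x (k + 1) t =
      carlitzE Fq x k (x ^ k) ^ (Fintype.card Fq - 1) * carlitzE Fq x k t
        - carlitzE Fq x k t ^ Fintype.card Fq := rfl

theorem carlitzE_succ_apply_pow_self (k : ℕ) : carlitzE Fq x (k + 1) (x ^ k) = 0 := by
  rw [carlitzE_succ_apply, pow_sub_one_mul Fintype.card_ne_zero, sub_self]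

theorem carlitzE_succ_apply_mul (n : ℕ) (t : L) :
    carlitzE Fq x (n + 1) (x * t) =
      x * carlitzE Fq x (n + 1) t
        + (x - x ^ Fintype.card Fq ^ (n + 1)) * carlitzE Fq x n t ^ Fintype.card Fq := by
  set q := Fintype.card Fq
  have frob_sub : ∀ u v : L, (u - v) ^ q = u ^ q - v ^ q :=
    map_sub (FiniteField.frobeniusAlgHom Fq L)
  induction n generalizing t with
  | zero =>
    simp only [carlitzE_succ_apply, carlitzE_zero_apply, pow_zero, one_pow, one_mul, mul_pow]
    ring
  | succ n ih =>
    have hs : carlitzE Fq x (n + 1) (x ^ (n + 1)) =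
        (x - x ^ q ^ (n + 1)) * carlitzE Fq x n (x ^ n) ^ q := by
      rw [pow_succ', ih, carlitzE_succ_apply_pow_self, mul_zero, zero_add]
    rw [carlitzE_succ_apply _ (n + 1), carlitzE_succ_apply _ (n + 1), ih,
      carlitzE_succ_apply _ n t, hs]
    set A := carlitzE Fq x n t
    set s := carlitzE Fq x n (x ^ n)
    set B := s ^ (q - 1) * A - A ^ q
    set ℓ := x - x ^ q ^ (n + 1)
    have hfrob_add : (x * B + ℓ * A ^ q) ^ q = x ^ q * B ^ q + ℓ ^ q * (A ^ q) ^ q := by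
      rw [← mul_pow, ← mul_pow]; exact map_add (FiniteField.frobeniusAlgHom Fq L) _ _
    have hB : B ^ q = (s ^ (q - 1)) ^ q * A ^ q - (A ^ q) ^ q := by
      rw [frob_sub, mul_pow]
    have hℓ : ℓ ^ q = x ^ q - x ^ q ^ (n + 2) := by
      rw [frob_sub, ← pow_mul, ← pow_succ]
    have hs' : (ℓ * s ^ q) ^ (q - 1) * ℓ = ℓ ^ q * (s ^ (q - 1)) ^ q := by
      rw [mul_pow, ← pow_sub_one_mul Fintype.card_ne_zero ℓ, ← pow_mul, ← pow_mul, mul_comm q]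
      ring
    linear_combination (-1) * hfrob_add + B ^ q * hℓ - ℓ ^ q * hB + A ^ q * hs'

theorem carlitzE_succ_apply_pow_succ (n : ℕ) :
    carlitzE Fq x (n + 1) (x ^ (n + 1)) =
      (x - x ^ Fintype.card Fq ^ (n + 1)) * carlitzE Fq x n (x ^ n) ^ Fintype.card Fq := by
  rw [pow_succ', carlitzE_succ_apply_mul, carlitzE_succ_apply_pow_self, mul_zero, zero_add]

end CommRing

variable [Field L] [Algebra Fq L] {x : L}

theorem carlitzE_aeval_ne_zero (hx : Transcendental Fq x) {k : ℕ} {p : Fq[X]}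
    (hp : (k : WithBot ℕ) ≤ p.degree) : carlitzE Fq x k (aeval x p) ≠ 0 := by
  induction k generalizing p with
  | zero =>
    rw [carlitzE_zero_apply]
    exact fun h =>
      ne_bot_of_le_ne_bot WithBot.coe_ne_bot hp (degree_eq_bot.2 (transcendental_iff.1 hx p h))
  | succ k ih =>
    intro hzero
    have hs : carlitzE Fq x k (x ^ k) ≠ 0 := by
      simpa using ih (p := X ^ k) (by rw [degree_X_pow])
    obtain ⟨c, hc⟩ :
        carlitzE Fq x k (aeval x p) / carlitzE Fq x k (x ^ k) ∈ (algebraMap Fq L).range := by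
      refine FiniteField.mem_range_of_pow_card_eq_self (sub_eq_zero.1 ?_).symm
      rw [div_sub_div_pow Fintype.card_ne_zero hs, ← carlitzE_succ_apply, hzero, zero_div]
    have hlt : (C c * X ^ k).degree < p.degree :=
      (degree_C_mul_X_pow_le k c).trans_lt (lt_of_lt_of_le (by exact_mod_cast k.lt_succ_self) hp)
    refine ih (p := p - C c * X ^ k) ?_ ?_
    · rw [degree_sub_eq_left_of_degree_lt hlt]; exact le_trans (by exact_mod_cast k.le_succ) hp
    · rw [map_sub, map_mul, aeval_C, map_pow, aeval_X, ← Algebra.smul_def, map_sub, map_smul,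
        Algebra.smul_def, hc, div_mul_cancel₀ _ hs, sub_self]

theorem carlitzE_pow_self_ne_zero (hx : Transcendental Fq x) (k : ℕ) :
    carlitzE Fq x k (x ^ k) ≠ 0 := by
  simpa using carlitzE_aeval_ne_zero hx (p := X ^ k) (by rw [degree_X_pow])

theorem sum_inv_carlitzE_aeval_monicOf (hx : Transcendental Fq x) (j k : ℕ) :
    ∑ c : Fin j → Fq, (carlitzE Fq x k (aeval x (X ^ k * monicOf Fq j c)))⁻¹ =
      (carlitzE Fq x k (x ^ k) * ∏ i ∈ Ioc k (k + j), (x - x ^ Fintype.card Fq ^ i))⁻¹ := by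
  induction j generalizing k with
  | zero => simp [monicOf]
  | succ j ih =>
    set s := carlitzE Fq x k (x ^ k)
    have hs : s ≠ 0 := carlitzE_pow_self_ne_zero hx k
    have hsplit : ∀ (a : Fq[X]) (e : Fq), carlitzE Fq x k (aeval x (X ^ k * (X * a + C e))) =
        carlitzE Fq x k (aeval x (X ^ (k + 1) * a)) + e • s := by
      intro a e
      rw [← map_smul, ← map_add]
      congr 1
      simp only [map_mul, map_add, map_pow, aeval_X, aeval_C, Algebra.smul_def]
      ring
    have hinner : ∀ a : Fq[X], a.Monic →
        ∑ e : Fq, (carlitzE Fq x k (aeval x (X ^ k * (X * a + C e))))⁻¹ =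
          s ^ (Fintype.card Fq - 1) * (carlitzE Fq x (k + 1) (aeval x (X ^ (k + 1) * a)))⁻¹ := by
      intro a ha
      have hdeg : ((k + 1 : ℕ) : WithBot ℕ) ≤ (X ^ (k + 1) * a).degree := by
        rw [← degree_X_pow (R := Fq)]
        exact degree_le_of_dvd (dvd_mul_right _ _) ((monic_X_pow (R := Fq) _).mul ha).ne_zero
      simp only [hsplit, carlitzE_succ_apply]
      exact FiniteField.sum_inv_add_smul hs (carlitzE_aeval_ne_zero hx hdeg)
    calc ∑ c : Fin (j + 1) → Fq, (carlitzE Fq x k (aeval x (X ^ k * monicOf Fq (j + 1) c)))⁻¹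
        = ∑ c : Fin j → Fq, ∑ e : Fq,
            (carlitzE Fq x k (aeval x (X ^ k * (X * monicOf Fq j c + C e))))⁻¹ := by
          rw [← (Fin.consEquiv fun _ => Fq).sum_comp, Fintype.sum_prod_type_right]
          exact sum_congr rfl fun c _ => sum_congr rfl fun e _ => by rw [← monicOf_succ_cons]; rfl
      _ = s ^ (Fintype.card Fq - 1) * ∑ c : Fin j → Fq,
            (carlitzE Fq x (k + 1) (aeval x (X ^ (k + 1) * monicOf Fq j c)))⁻¹ := by
          rw [mul_sum]
          exact sum_congr rfl fun c _ => hinner _ (monicOf_monic j c)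
      _ = _ := by
          rw [ih, carlitzE_succ_apply_pow_succ, ← Icc_add_one_left_eq_Ioc k,
            ← mul_prod_Ioc_eq_prod_Icc (by omega), ← pow_sub_one_mul Fintype.card_ne_zero s,
            show k + (j + 1) = k + 1 + j by ring]
          field_simp

theorem sum_inv_aeval_monicOf (hx : Transcendental Fq x) (j : ℕ) :
    ∑ c : Fin j → Fq, (aeval x (monicOf Fq j c))⁻¹ =
      (∏ i ∈ Icc 1 j, (x - x ^ Fintype.card Fq ^ i))⁻¹ := by
  rw [show Icc 1 j = Ioc 0 j from Icc_add_one_left_eq_Ioc 0 j]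
  simpa using sum_inv_carlitzE_aeval_monicOf hx j 0

end CarlitzE

/-- Carlitz, (9.09): `∑_{a ∈ A⁺(j)} a(x)⁻¹ = ℓ_j(x)⁻¹` in `𝔽_q(x)`. -/
theorem statement6
    (Fq : Type*) [Field Fq] [Fintype Fq] (q : ℕ) (hq : q = Fintype.card Fq) (j : ℕ) :
    ∑ c : Fin j → Fq, (algebraMap (Polynomial Fq) (RatFunc Fq) (monicOf Fq j c))⁻¹ =
      (ellr Fq q j)⁻¹ := by
  subst hq
  simpa [ellr, xr] using sum_inv_aeval_monicOf (RatFunc.transcendental_X (K := Fq)) j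
end
end

section
/- In the Tate algebra $\mathbb{T}$ with Frobenius twist $\tau$, the set of solutions $X \in \mathbb{T}$ of the difference equation $\tau(X) = (t - \theta) X$ is a free $\mathbb{F}_q[t]$-module of rank one, generated by the Anderson–Thakur function $\omega(t) = \lambda_\theta \prod_{i \geq 0}(1 - t/\theta^{q^i})^{-1}$. -/
noncomputable section

open Polynomial Filter PowerSeries

/-- Membership in the Tate algebra `𝕋 ⊆ ℂ∞[[t]]`: the coefficients tend to `0`. -/
def InTate (Cinf : Type*) [NormedField Cinf] (f : PowerSeries Cinf) : Prop :=
  Tendsto (fun m : ℕ => ‖PowerSeries.coeff m f‖) atTop (nhds 0)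

/-!
The partial products `P_N = λ ∏_{i<N} (1 - t/θ^{q^i})⁻¹` satisfy `τ P_N = (t - θ) P_{N+1}`, so
their coefficientwise limit `ω` solves the equation. The `m`-th coefficient of `P_N` has norm at
most `|λ| |θ|^{-m}`, so every higher coefficient of `ω` is strictly smaller than its constant
term `λ`. If `X ∈ 𝕋` is another solution, `f = X / ω` is `τ`-invariant, so its coefficients lie
in `𝔽_q` and have norm `0` or `1`. By the ultrametric inequality, `coeff_m f ≠ 0` forces
`|coeff_m X| = |λ|`; as `coeff_m X → 0`, only finitely many coefficients of `f` are nonzero.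
-/

open scoped NNReal PowerSeries.WithPiTopology

theorem FiniteField.mem_range_algebraMap_of_pow_card_eq {F L : Type*} [Field F] [Fintype F]
    [Field L] [Algebra F L] {x : L} (hx : x ^ Fintype.card F = x) :
    x ∈ (algebraMap F L).range := by
  have hne := FiniteField.X_pow_card_sub_X_ne_zero F (Fintype.one_lt_card (α := F))
  have hsplit : (Polynomial.X ^ Fintype.card F - Polynomial.X : F[X]).Splits := by
    rw [splits_iff_card_roots, FiniteField.roots_X_pow_card_sub_X,
      FiniteField.X_pow_card_sub_X_natDegree_eq F (Fintype.one_lt_card (α := F))]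
    rfl
  exact hsplit.mem_range_of_isRoot hne (by simp [hx])

theorem FiniteField.norm_algebraMap_eq_one {F L : Type*} [Field F] [Fintype F]
    [NormedField L] [Algebra F L] {b : F} (hb : b ≠ 0) : ‖algebraMap F L b‖ = 1 := by
  refine IsOfFinOrder.norm_eq_one (isOfFinOrder_iff_pow_eq_one.mpr ⟨Fintype.card F - 1, ?_, ?_⟩)
  · have := Fintype.one_lt_card (α := F)
    omega
  · rw [← map_pow, FiniteField.pow_card_sub_one_eq_one b hb, map_one]

namespace PowerSeries

theorem map_inv {k l : Type*} [Field k] [Field l] (σ : k →+* l) (φ : k⟦X⟧) :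
    map σ φ⁻¹ = (map σ φ)⁻¹ := by
  have hconst : constantCoeff (map σ φ) = σ (constantCoeff φ) := by
    rw [← coeff_zero_eq_constantCoeff_apply, coeff_map, coeff_zero_eq_constantCoeff_apply]
  by_cases h : constantCoeff φ = 0
  · rw [inv_eq_zero.mpr h, inv_eq_zero.mpr (by rw [hconst, h, map_zero]), map_zero]
  · rw [eq_inv_iff_mul_eq_one (by rwa [hconst, _root_.map_ne_zero]), ← map_mul,
      PowerSeries.inv_mul_cancel _ h, map_one]

theorem exists_eq_map_polynomial_of_coeff_mem_range {R S : Type*} [CommSemiring R]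
    [CommSemiring S] (i : R →+* S) {f : S⟦X⟧} (hrange : ∀ m, coeff m f ∈ Set.range i)
    (hzero : ∀ᶠ m in atTop, coeff m f = 0) : ∃ a : R[X], f = map i (a : R⟦X⟧) := by
  choose g hg using hrange
  obtain ⟨M, hM⟩ := eventually_atTop.mp hzero
  refine ⟨trunc M (mk g), ext fun n => ?_⟩
  rw [coeff_map, Polynomial.coeff_coe, coeff_trunc, coeff_mk]
  split_ifs with hn
  · exact (hg n).symm
  · rw [map_zero, hM n (not_lt.mp hn)]

section Ultrametric

variable {K : Type*} [NormedField K] [IsUltrametricDist K]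

open Finset.HasAntidiagonal

def geomBounded (r : ℝ≥0) : Submonoid K⟦X⟧ where
  carrier := {f | ∀ m, ‖coeff m f‖ ≤ r ^ m}
  one_mem' m := by
    rcases m with _ | m <;> simp [coeff_one]
  mul_mem' {f g} hf hg m := by
    rw [coeff_mul]
    refine IsUltrametricDist.norm_sum_le_of_forall_le_of_nonneg (by positivity) fun p hp => ?_
    rw [← mem_antidiagonal.mp hp, pow_add, norm_mul]
    exact mul_le_mul (hf _) (hg _) (norm_nonneg _) (by positivity)

theorem one_sub_C_mul_X_mem_geomBounded {r : ℝ≥0} {c : K} (hc : ‖c‖ ≤ r) :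
    1 - C c * X ∈ geomBounded r := by
  intro m
  rcases m with _ | _ | m <;> simp [coeff_one, hc]

theorem inv_mem_geomBounded {r : ℝ≥0} {f : K⟦X⟧} (hf1 : constantCoeff f = 1)
    (hf : f ∈ geomBounded r) : f⁻¹ ∈ geomBounded r := by
  intro m
  induction m using Nat.strong_induction_on with
  | _ m ih =>
    rw [coeff_inv]
    split_ifs with hm
    · simp [hm, hf1]
    rw [hf1, inv_one, neg_one_mul, norm_neg]
    refine IsUltrametricDist.norm_sum_le_of_forall_le_of_nonneg (by positivity) fun p hp => ?_
    split_ifs with hp2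
    · rw [← mem_antidiagonal.mp hp, pow_add, norm_mul]
      exact mul_le_mul (hf _) (ih _ hp2) (norm_nonneg _) (by positivity)
    · simp

theorem norm_coeff_mul_eq_of_dominant {f g : K⟦X⟧} {m : ℕ} (hf : ∀ i, ‖coeff i f‖ ≤ 1)
    (hfm : ‖coeff m f‖ = 1) (hg : ∀ j ≠ 0, ‖coeff j g‖ < ‖coeff 0 g‖) :
    ‖coeff m (f * g)‖ = ‖coeff 0 g‖ := by
  have hmem : (m, 0) ∈ antidiagonal m := by simp
  rw [coeff_mul, ← Finset.sum_erase_add _ _ hmem]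
  have hlead : ‖coeff m f * coeff 0 g‖ = ‖coeff 0 g‖ := by rw [norm_mul, hfm, one_mul]
  have hterm : ∀ p ∈ (antidiagonal m).erase (m, 0),
      ‖coeff p.1 f * coeff p.2 g‖ < ‖coeff 0 g‖ := by
    intro p hp
    obtain ⟨hpm, hp⟩ := Finset.mem_erase.mp hp
    have hp2 : p.2 ≠ 0 := fun h => hpm <| by
      ext <;> simp_all
    rw [norm_mul]
    exact (mul_le_of_le_one_left (norm_nonneg _) (hf _)).trans_lt (hg _ hp2)
  have hrest :
      ‖∑ p ∈ (antidiagonal m).erase (m, 0), coeff p.1 f * coeff p.2 g‖ < ‖coeff 0 g‖ := by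
    obtain ⟨p, hp, hle⟩ := IsUltrametricDist.exists_norm_finsetSum_le
      ((antidiagonal m).erase (m, 0)) (fun p => coeff p.1 f * coeff p.2 g)
    rcases Finset.eq_empty_or_nonempty ((antidiagonal m).erase (m, 0)) with he | hne
    · rw [he, Finset.sum_empty, norm_zero]
      exact (norm_nonneg _).trans_lt (hg 1 one_ne_zero)
    · exact hle.trans_lt (hterm p (hp hne))
  rw [IsUltrametricDist.norm_add_eq_max_of_norm_ne_norm (by rw [hlead]; exact hrest.ne),
    hlead, max_eq_right hrest.le]

end Ultrametric

theorem map_map_algebraMap_of_pow_card {F K : Type*} [Field F] [Fintype F] [CommRing K]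
    [Algebra F K] {σ : K →+* K} (hσ : ∀ x, σ x = x ^ Fintype.card F) (a : F⟦X⟧) :
    map σ (map (algebraMap F K) a) = map (algebraMap F K) a := by
  ext m
  rw [coeff_map, coeff_map, hσ, ← map_pow, FiniteField.pow_card]

section Solutions

variable {K : Type*} [NormedField K] [IsUltrametricDist K]
  {F : Type*} [Field F] [Fintype F] [Algebra F K]

theorem eventually_coeff_eq_zero_of_inTate_mul {f ω : K⟦X⟧}
    (hf : ∀ m, coeff m f ∈ Set.range (algebraMap F K))
    (hω : ∀ j ≠ 0, ‖coeff j ω‖ < ‖coeff 0 ω‖) (hfω : InTate K (f * ω)) :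
    ∀ᶠ m in atTop, coeff m f = 0 := by
  have hnorm : ∀ m, coeff m f ≠ 0 → ‖coeff m f‖ = 1 := by
    rintro m hm
    obtain ⟨b, hb⟩ := hf m
    rw [← hb] at hm ⊢
    exact FiniteField.norm_algebraMap_eq_one (by rintro rfl; simp at hm)
  have hle : ∀ m, ‖coeff m f‖ ≤ 1 := fun m => by
    by_cases hm : coeff m f = 0
    · simp [hm]
    · exact (hnorm m hm).le
  filter_upwards [hfω.eventually_lt_const ((norm_nonneg _).trans_lt (hω 1 one_ne_zero))]
    with m hm
  by_contra hne
  exact hm.ne (norm_coeff_mul_eq_of_dominant hle (hnorm m hne) hω)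

theorem exists_eq_map_mul_of_map_eq {σ : K →+* K} (hσ : ∀ x, σ x = x ^ Fintype.card F)
    {A ω Y : K⟦X⟧} (hωσ : map σ ω = A * ω) (hω : ∀ j ≠ 0, ‖coeff j ω‖ < ‖coeff 0 ω‖)
    (hY : InTate K Y) (hYσ : map σ Y = A * Y) :
    ∃ a : F[X], Y = map (algebraMap F K) (a : F⟦X⟧) * ω := by
  have hω0 : coeff 0 ω ≠ 0 := norm_pos_iff.mp ((norm_nonneg _).trans_lt (hω 1 one_ne_zero))
  have hσω : map σ ω ≠ 0 := fun h => hω0 <| by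
    simpa using congrArg (coeff 0) h
  set f := Y * ω⁻¹
  have hfω : f * ω = Y := by
    rw [mul_assoc, PowerSeries.inv_mul_cancel _ (by rwa [← coeff_zero_eq_constantCoeff_apply]),
      mul_one]
  have hfix : map σ f = f :=
    mul_right_cancel₀ hσω (by rw [← map_mul, hfω, hYσ, hωσ, ← hfω]; ring)
  have hrange : ∀ m, coeff m f ∈ Set.range (algebraMap F K) := fun m =>
    FiniteField.mem_range_algebraMap_of_pow_card_eq (by rw [← hσ, ← coeff_map, hfix])
  obtain ⟨a, ha⟩ := exists_eq_map_polynomial_of_coeff_mem_range _ hrange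
    (eventually_coeff_eq_zero_of_inTate_mul hrange hω (hfω ▸ hY))
  exact ⟨a, by rw [← hfω, ha]⟩

end Solutions

section AndersonThakur

variable {K : Type*} [NormedField K]

def andersonThakurPartial (θ lam : K) (q N : ℕ) : K⟦X⟧ :=
  C lam * ∏ i ∈ Finset.range N, (1 - C ((θ ^ q ^ i)⁻¹) * X)⁻¹

variable {θ lam : K} {q : ℕ}

theorem constantCoeff_andersonThakurPartial (N : ℕ) :
    constantCoeff (andersonThakurPartial θ lam q N) = lam := by
  simp [andersonThakurPartial, map_prod, constantCoeff_inv]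

theorem map_andersonThakurPartial {σ : K →+* K} (hθ : θ ≠ 0) (hσθ : σ θ = θ ^ q)
    (hσlam : σ lam = -θ * lam) (N : ℕ) :
    map σ (andersonThakurPartial θ lam q N) =
      (X - C θ) * andersonThakurPartial θ lam q (N + 1) := by
  have hshift : ∀ i, map σ (1 - C ((θ ^ q ^ i)⁻¹) * X) = 1 - C ((θ ^ q ^ (i + 1))⁻¹) * X := by
    intro i
    simp [hσθ, ← pow_mul, ← pow_succ']
  have hfactor : C (-θ * lam) = (X - C θ) * C lam * (1 - C ((θ ^ q ^ 0)⁻¹) * X)⁻¹ := by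
    have hθθ : C θ * C θ⁻¹ = (1 : K⟦X⟧) := by rw [← map_mul, mul_inv_cancel₀ hθ, map_one]
    rw [eq_mul_inv_iff_mul_eq (by simp), pow_zero, pow_one, map_mul, map_neg]
    linear_combination (C lam * X) * hθθ
  simp only [andersonThakurPartial, map_mul, map_C, map_prod, map_inv, hshift, hσlam]
  rw [Finset.prod_range_succ' _ N, ← map_mul, hfactor]
  ring

theorem map_eq_X_sub_C_mul_of_tendsto {σ : K →+* K} (hσ : Continuous σ) (hθ : θ ≠ 0)
    (hσθ : σ θ = θ ^ q) (hσlam : σ lam = -θ * lam) {ω : K⟦X⟧}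
    (hω : ∀ m, Tendsto (fun N => coeff m (andersonThakurPartial θ lam q N)) atTop
      (nhds (coeff m ω))) :
    map σ ω = (X - C θ) * ω := by
  have hlim := (WithPiTopology.tendsto_iff_coeff_tendsto K _ _ _).mpr hω
  have hlimσ : Tendsto (fun N => map σ (andersonThakurPartial θ lam q N)) atTop
      (nhds (map σ ω)) :=
    (WithPiTopology.tendsto_iff_coeff_tendsto K _ _ _).mpr fun m => by
      simp only [coeff_map]
      exact (hσ.tendsto _).comp (hω m)
  refine tendsto_nhds_unique hlimσ ?_
  simp only [map_andersonThakurPartial hθ hσθ hσlam]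
  exact (hlim.comp (tendsto_add_atTop_nat 1)).const_mul _

variable [IsUltrametricDist K]

theorem norm_coeff_andersonThakurPartial_le (hq : q ≠ 0) (hθ : 1 ≤ ‖θ‖) (N m : ℕ) :
    ‖coeff m (andersonThakurPartial θ lam q N)‖ ≤ ‖lam‖ * ‖θ‖⁻¹ ^ m := by
  have hprod : ∏ i ∈ Finset.range N, (1 - C ((θ ^ q ^ i)⁻¹) * X)⁻¹ ∈ geomBounded ‖θ‖₊⁻¹ :=
    Submonoid.prod_mem _ fun i _ => inv_mem_geomBounded (by simp) <|
      one_sub_C_mul_X_mem_geomBounded <| by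
        simpa using inv_anti₀ (by positivity) (le_self_pow₀ hθ (pow_ne_zero i hq))
  rw [andersonThakurPartial, coeff_C_mul, norm_mul]
  gcongr
  simpa using hprod m

theorem norm_coeff_lt_norm_coeff_zero_of_tendsto (hq : q ≠ 0) (hθ : 1 < ‖θ‖) (hlam : lam ≠ 0)
    {ω : K⟦X⟧}
    (hω : ∀ m, Tendsto (fun N => coeff m (andersonThakurPartial θ lam q N)) atTop
      (nhds (coeff m ω))) :
    ∀ j ≠ 0, ‖coeff j ω‖ < ‖coeff 0 ω‖ := by
  have hω0 : coeff 0 ω = lam := tendsto_nhds_unique (hω 0) <| by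
    simp only [coeff_zero_eq_constantCoeff_apply, constantCoeff_andersonThakurPartial]
    exact tendsto_const_nhds
  intro j hj
  calc ‖coeff j ω‖ ≤ ‖lam‖ * ‖θ‖⁻¹ ^ j :=
        le_of_tendsto (hω j).norm <| Eventually.of_forall fun N =>
          norm_coeff_andersonThakurPartial_le hq hθ.le N j
    _ < ‖coeff 0 ω‖ := by
        rw [hω0]
        exact mul_lt_of_lt_one_right (norm_pos_iff.mpr hlam)
          (pow_lt_one₀ (by positivity) (inv_lt_one_of_one_lt₀ hθ) hj)

end AndersonThakur

end PowerSeries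

theorem statement10_general
    (Fq : Type*) [Field Fq] [Fintype Fq]
    (Cinf : Type*) [NormedField Cinf]
    [IsUltrametricDist Cinf] [Algebra Fq Cinf] (θ : Cinf)
    (q : ℕ) (hq : q = Fintype.card Fq) (hθ : ‖θ‖ = (q : ℝ))
    (p k : ℕ) [ExpChar Cinf p] (hpk : q = p ^ k)
    (lam : Cinf) (hlam : lam ^ (q - 1) = -θ)
    (ω : PowerSeries Cinf)
    (hω : ∀ m : ℕ,
      Tendsto
        (fun N : ℕ => PowerSeries.coeff m
          (PowerSeries.C lam *
            ∏ i ∈ Finset.range N,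
              (1 - PowerSeries.C ((θ ^ q ^ i)⁻¹) * PowerSeries.X)⁻¹))
        atTop (nhds (PowerSeries.coeff m ω))) :
    (∀ X : PowerSeries Cinf, InTate Cinf X →
      (PowerSeries.map (iterateFrobenius Cinf p k) X = (PowerSeries.X - PowerSeries.C θ) * X ↔
        ∃ a : Polynomial Fq,
          X = PowerSeries.map (algebraMap Fq Cinf) (↑a : PowerSeries Fq) * ω)) ∧
    Function.Injective
      (fun a : Polynomial Fq =>
        PowerSeries.map (algebraMap Fq Cinf) (↑a : PowerSeries Fq) * ω) := by
  have hq1 : 1 < q := hq ▸ Fintype.one_lt_card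
  have hθ1 : 1 < ‖θ‖ := by rw [hθ]; exact_mod_cast hq1
  have hθ0 : θ ≠ 0 := norm_pos_iff.mp (one_pos.trans hθ1)
  have hlam0 : lam ≠ 0 := by
    rintro rfl
    exact hθ0 (by simpa [zero_pow (Nat.sub_ne_zero_of_lt hq1)] using hlam.symm)
  have hτ : ∀ x, iterateFrobenius Cinf p k x = x ^ q := fun x => by
    rw [iterateFrobenius_def, hpk]
  have hτq : ∀ x, iterateFrobenius Cinf p k x = x ^ Fintype.card Fq := hq ▸ hτ
  have hτω : PowerSeries.map (iterateFrobenius Cinf p k) ω =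
      (PowerSeries.X - PowerSeries.C θ) * ω :=
    PowerSeries.map_eq_X_sub_C_mul_of_tendsto ((continuous_pow q).congr fun x => (hτ x).symm)
      hθ0 (hτ θ) (by rw [hτ, ← Nat.sub_add_cancel hq1.le, pow_succ, hlam]) hω
  have hdom := PowerSeries.norm_coeff_lt_norm_coeff_zero_of_tendsto (by omega) hθ1 hlam0 hω
  refine ⟨fun Y hY => ⟨PowerSeries.exists_eq_map_mul_of_map_eq hτq hτω hdom hY, ?_⟩,
    fun a b hab => ?_⟩
  · rintro ⟨a, rfl⟩
    rw [map_mul, PowerSeries.map_map_algebraMap_of_pow_card hτq, hτω]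
    ring
  · have hω0 : ω ≠ 0 := fun h => by simpa [h] using hdom 1 one_ne_zero
    exact Polynomial.coe_injective Fq <|
      PowerSeries.map_injective _ (algebraMap Fq Cinf).injective (mul_right_cancel₀ hω0 hab)

/-- the set of solutions `X ∈ 𝕋` of `τ(X) = (t - θ) X` is a free
`𝔽_q[t]`-module of rank one generated by the Anderson–Thakur function `ω`:
every solution in `𝕋` equals `a(t)·ω` with `a ∈ 𝔽_q[t]`, uniquely. -/
theorem statement10
    (Fq : Type*) [Field Fq] [Fintype Fq]
    (Cinf : Type*) [NormedField Cinf] [CompleteSpace Cinf] [IsAlgClosed Cinf]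
    [IsUltrametricDist Cinf] [Algebra Fq Cinf] (θ : Cinf)
    (q : ℕ) (hq : q = Fintype.card Fq) (hθ : ‖θ‖ = (q : ℝ))
    (p k : ℕ) [ExpChar Cinf p] (hpk : q = p ^ k)
    (lam : Cinf) (hlam : lam ^ (q - 1) = -θ)
    (ω : PowerSeries Cinf)
    (hω : ∀ m : ℕ,
      Tendsto
        (fun N : ℕ => PowerSeries.coeff m
          (PowerSeries.C lam *
            ∏ i ∈ Finset.range N,
              (1 - PowerSeries.C ((θ ^ q ^ i)⁻¹) * PowerSeries.X)⁻¹))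
        atTop (nhds (PowerSeries.coeff m ω))) :
    (∀ X : PowerSeries Cinf, InTate Cinf X →
      (PowerSeries.map (iterateFrobenius Cinf p k) X = (PowerSeries.X - PowerSeries.C θ) * X ↔
        ∃ a : Polynomial Fq,
          X = PowerSeries.map (algebraMap Fq Cinf) (↑a : PowerSeries Fq) * ω)) ∧
    Function.Injective
      (fun a : Polynomial Fq =>
        PowerSeries.map (algebraMap Fq Cinf) (↑a : PowerSeries Fq) * ω) :=
  statement10_general Fq Cinf θ q hq hθ p k hpk lam hlam ω hω
end
end

section
/- For $z \in \mathbb{C}_\infty$, the function $\chi_t(z) = \omega(t)^{-1} f_t(z) \in \mathbb{T}$ vanishes if and only if $z = 0$. -/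
noncomputable section

open Polynomial Filter PowerSeries

/-- `d_i = ∏_{j=0}^{i-1} (θ^{q^i} - θ^{q^j})`, with `d_0 = 1`. -/
def carlitzD (Cinf : Type*) [Field Cinf] (θ : Cinf) (q i : ℕ) : Cinf :=
  ∏ j ∈ Finset.range i, (θ ^ q ^ i - θ ^ q ^ j)

/-- The Carlitz exponential `exp_C(z) = ∑_{i ≥ 0} d_i⁻¹ z^{q^i}`. -/
def expC (Cinf : Type*) [NormedField Cinf] (θ : Cinf) (q : ℕ) (z : Cinf) : Cinf :=
  ∑' i : ℕ, (carlitzD Cinf θ q i)⁻¹ * z ^ q ^ i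

/-- `e_C(z) = exp_C(π̃ z)`. -/
def eC (Cinf : Type*) [NormedField Cinf] (θ π : Cinf) (q : ℕ) (z : Cinf) : Cinf :=
  expC Cinf θ q (π * z)

/-- The `N`-th partial sum of the Anderson generating function
`f_t(z) = ∑_{n ≥ 0} (π̃ z)^{q^n} / ((θ^{q^n} - t) d_n)`, as a power series in `t`. -/
def ftPartial (Cinf : Type*) [NormedField Cinf] (θ π : Cinf) (q : ℕ) (z : Cinf) (N : ℕ) :
    PowerSeries Cinf :=
  ∑ n ∈ Finset.range N,
    PowerSeries.C (R := Cinf) ((π * z) ^ q ^ n * (carlitzD Cinf θ q n)⁻¹) *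
      (PowerSeries.C (R := Cinf) (θ ^ q ^ n) - PowerSeries.X)⁻¹

/-!
The `m`-th coefficient of `f_t(z)` is `exp_C(π̃ z / θ^{m+1})`. If `f_t(z) = 0`, pick `m` with
`|z| < |θ|^{m+1}`: then `π̃ z / θ^{m+1}` lies in the kernel `π̃ 𝔽_q[θ]` of `exp_C`, and since a
nonzero `a ∈ 𝔽_q[θ]` has `|a| = |θ|^{deg a} ≥ 1`, this forces `z = 0`. Finally `ω` has constant
term `λ ≠ 0`, so it is a unit and `χ_t(z) = 0` exactly when `f_t(z) = 0`.
-/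

theorem PowerSeries.inv_C_sub_X {k : Type*} [Field k] {a : k} (ha : a ≠ 0) :
    (C a - X)⁻¹ = PowerSeries.mk fun m => a⁻¹ ^ (m + 1) := by
  have h := invUnitsSub_mul_sub (Units.mk0 a ha)
  rw [Units.val_mk0] at h
  refine ((PowerSeries.eq_inv_iff_mul_eq_one (by simp [ha])).mpr ?_).symm
  convert h using 2
  ext m
  simp [coeff_invUnitsSub, Units.val_pow_eq_pow_val]

theorem PowerSeries.constantCoeff_C_mul_prod_inv_one_sub_C_mul_X {k ι : Type*} [Field k]
    (a : k) (s : Finset ι) (c : ι → k) :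
    constantCoeff (C a * ∏ i ∈ s, (1 - C (c i) * X)⁻¹) = a := by
  simp [map_prod, constantCoeff_inv]

theorem hasSum_of_tendsto_sum_range {G : Type*} [AddCommGroup G] [UniformSpace G]
    [IsUniformAddGroup G] [NonarchimedeanAddGroup G] [CompleteSpace G] [T2Space G]
    {f : ℕ → G} {L : G} (h : Tendsto (fun N => ∑ n ∈ Finset.range N, f n) atTop (nhds L)) :
    HasSum f L := by
  have hf : Tendsto f atTop (nhds 0) := by
    simpa [Finset.sum_range_succ] using (h.comp (tendsto_add_atTop_nat 1)).sub h
  have hs : Summable f :=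
    NonarchimedeanAddGroup.summable_of_tendsto_cofinite_zero (by rwa [Nat.cofinite_eq_atTop])
  exact tendsto_nhds_unique h hs.hasSum.tendsto_sum_nat ▸ hs.hasSum

theorem norm_algebraMap_of_ne_zero {F K : Type*} [Field F] [Finite F] [NormedDivisionRing K]
    [Algebra F K] {c : F} (hc : c ≠ 0) : ‖algebraMap F K c‖ = 1 := by
  have : IsOfFinOrder c := by
    simpa using (Units.coeHom F).isOfFinOrder (isOfFinOrder_of_finite (Units.mk0 c hc))
  exact ((algebraMap F K : F →* K).isOfFinOrder this).norm_eq_one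

section NormAeval

variable {F K : Type*} [Field F] [Finite F] [NormedField K] [IsUltrametricDist K] [Algebra F K]
  {θ : K}

theorem norm_aeval_le_pow_natDegree (hθ : 1 ≤ ‖θ‖) (p : F[X]) :
    ‖aeval θ p‖ ≤ ‖θ‖ ^ p.natDegree := by
  rw [aeval_eq_sum_range]
  refine IsUltrametricDist.norm_sum_le_of_forall_le_of_nonneg (by positivity) fun i hi => ?_
  have hi : i ≤ p.natDegree := Nat.lt_succ_iff.mp (Finset.mem_range.mp hi)
  have hc : ‖algebraMap F K (p.coeff i)‖ ≤ 1 := by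
    rcases eq_or_ne (p.coeff i) 0 with h | h
    · simp [h]
    · exact (norm_algebraMap_of_ne_zero h).le
  calc ‖p.coeff i • θ ^ i‖ = ‖algebraMap F K (p.coeff i)‖ * ‖θ‖ ^ i := by
        rw [Algebra.smul_def, norm_mul, norm_pow]
    _ ≤ 1 * ‖θ‖ ^ p.natDegree := by gcongr
    _ = ‖θ‖ ^ p.natDegree := one_mul _

theorem norm_aeval_eq_pow_natDegree (hθ : 1 < ‖θ‖) {p : F[X]} (hp : p ≠ 0) :
    ‖aeval θ p‖ = ‖θ‖ ^ p.natDegree := by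
  have hlead : ‖algebraMap F K p.leadingCoeff * θ ^ p.natDegree‖ = ‖θ‖ ^ p.natDegree := by
    rw [norm_mul, norm_pow, norm_algebraMap_of_ne_zero (leadingCoeff_ne_zero.mpr hp), one_mul]
  have htail : ‖aeval θ p.eraseLead‖ < ‖θ‖ ^ p.natDegree := by
    rcases eq_or_ne p.eraseLead 0 with h | h
    · simp [h, zero_lt_one.trans hθ]
    · exact (norm_aeval_le_pow_natDegree hθ.le _).trans_lt <| pow_lt_pow_right₀ hθ <|
        (eraseLead_natDegree_lt_or_eraseLead_eq_zero p).resolve_right h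
  have hsplit : aeval θ p =
      aeval θ p.eraseLead + algebraMap F K p.leadingCoeff * θ ^ p.natDegree := by
    conv_lhs => rw [← eraseLead_add_C_mul_X_pow p]
    rw [map_add, map_mul, map_pow, aeval_C, aeval_X]
  rw [hsplit, IsUltrametricDist.norm_add_eq_max_of_norm_ne_norm (hlead ▸ htail.ne), hlead,
    max_eq_right htail.le]

theorem eq_zero_of_norm_aeval_lt_one (hθ : 1 < ‖θ‖) {p : F[X]} (h : ‖aeval θ p‖ < 1) :
    p = 0 := by
  by_contra hp
  rw [norm_aeval_eq_pow_natDegree hθ hp] at h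
  exact h.not_ge (one_le_pow₀ hθ.le)

end NormAeval

section AndersonGeneratingFunction

variable {K : Type*} [NormedField K] {θ π : K} {q : ℕ}

theorem ftPartial_zero (hq : q ≠ 0) (N : ℕ) : ftPartial K θ π q 0 N = 0 := by
  simp [ftPartial, hq]

theorem coeff_ftPartial (hθ : θ ≠ 0) (z : K) (N m : ℕ) :
    coeff m (ftPartial K θ π q z N) =
      ∑ n ∈ Finset.range N, (carlitzD K θ q n)⁻¹ * (π * (z / θ ^ (m + 1))) ^ q ^ n := by
  simp only [ftPartial, map_sum]
  refine Finset.sum_congr rfl fun n _ => ?_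
  rw [PowerSeries.inv_C_sub_X (pow_ne_zero _ hθ), PowerSeries.coeff_C_mul, coeff_mk, ← inv_pow,
    ← pow_mul, mul_comm (q ^ n), pow_mul, inv_pow, div_eq_mul_inv, ← mul_assoc, mul_pow (π * z)]
  ring

theorem eq_expC_of_tendsto_coeff_ftPartial [CompleteSpace K] [IsUltrametricDist K]
    (hθ : θ ≠ 0) {z c : K} {m : ℕ}
    (h : Tendsto (fun N => coeff m (ftPartial K θ π q z N)) atTop (nhds c)) :
    c = expC K θ q (π * (z / θ ^ (m + 1))) := by
  simp only [coeff_ftPartial hθ] at h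
  exact (hasSum_of_tendsto_sum_range h).tsum_eq.symm

end AndersonGeneratingFunction

theorem eq_zero_of_expC_mul_div_pow_eq_zero {F K : Type*} [Field F] [Finite F] [NormedField K]
    [IsUltrametricDist K] [Algebra F K] {θ π : K} {q : ℕ}
    (hker : ∀ z : K, expC K θ q z = 0 ↔ ∃ a : F[X], z = π * aeval θ a) (hπ : π ≠ 0)
    (hθ : 1 < ‖θ‖) {z : K} {m : ℕ} (hz : ‖z‖ < ‖θ‖ ^ (m + 1))
    (h : expC K θ q (π * (z / θ ^ (m + 1))) = 0) : z = 0 := by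
  obtain ⟨a, ha⟩ := (hker _).mp h
  have hza : z / θ ^ (m + 1) = aeval θ a := mul_left_cancel₀ hπ ha
  have hnorm : ‖aeval θ a‖ < 1 := by
    rwa [← hza, norm_div, norm_pow, div_lt_one (by positivity)]
  have hθ0 : θ ≠ 0 := norm_pos_iff.mp (zero_lt_one.trans hθ)
  simpa [eq_zero_of_norm_aeval_lt_one hθ hnorm, hθ0] using hza

theorem statement15_general
    (Fq : Type*) [Field Fq] [Fintype Fq]
    (Cinf : Type*) [NormedField Cinf] [CompleteSpace Cinf]
    [IsUltrametricDist Cinf] [Algebra Fq Cinf] (θ : Cinf)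
    (q : ℕ) (hq : q = Fintype.card Fq) (hθ : ‖θ‖ = (q : ℝ))
    (π : Cinf) (hπ : ‖π‖ = (q : ℝ) ^ ((q : ℝ) / ((q : ℝ) - 1)))
    (hker : ∀ z : Cinf, expC Cinf θ q z = 0 ↔ ∃ a : Polynomial Fq, z = π * aeval θ a)
    (lam : Cinf) (hlam : lam ^ (q - 1) = -θ)
    (ω : PowerSeries Cinf)
    (hω : ∀ m : ℕ,
      Tendsto
        (fun N : ℕ => PowerSeries.coeff (R := Cinf) m
          (PowerSeries.C (R := Cinf) lam *
            ∏ i ∈ Finset.range N,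
              (1 - PowerSeries.C (R := Cinf) ((θ ^ q ^ i)⁻¹) * PowerSeries.X)⁻¹))
        atTop (nhds (PowerSeries.coeff (R := Cinf) m ω)))
    (ft : Cinf → PowerSeries Cinf)
    (hft : ∀ (z : Cinf) (m : ℕ),
      Tendsto (fun N : ℕ => PowerSeries.coeff (R := Cinf) m (ftPartial Cinf θ π q z N))
        atTop (nhds (PowerSeries.coeff (R := Cinf) m (ft z)))) :
    ∀ z : Cinf, ω⁻¹ * ft z = 0 ↔ z = 0 := by
  have hq1 : 1 < q := hq ▸ Fintype.one_lt_card
  have hθ1 : 1 < ‖θ‖ := by rw [hθ]; exact_mod_cast hq1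
  have hθ0 : θ ≠ 0 := norm_pos_iff.mp (zero_lt_one.trans hθ1)
  have hπ0 : π ≠ 0 := norm_pos_iff.mp (hπ ▸ by positivity)
  have hlam0 : lam ≠ 0 := by
    rintro rfl
    exact hθ0 (neg_eq_zero.mp (hlam ▸ zero_pow (by omega)))
  have hω0 : constantCoeff ω = lam := by
    have h := hω 0
    simp only [coeff_zero_eq_constantCoeff_apply,
      constantCoeff_C_mul_prod_inv_one_sub_C_mul_X] at h
    exact (tendsto_const_nhds_iff.mp h).symm
  have hωinv : ω⁻¹ ≠ 0 := fun h => by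
    simpa [hω0, hlam0] using congr_arg PowerSeries.constantCoeff h
  intro z
  constructor
  · intro h
    have hftz : ft z = 0 := (mul_eq_zero.mp h).resolve_left hωinv
    obtain ⟨m, hm⟩ := pow_unbounded_of_one_lt ‖z‖ hθ1
    have hzm : ‖z‖ < ‖θ‖ ^ (m + 1) := hm.trans (pow_lt_pow_right₀ hθ1 m.lt_succ_self)
    refine eq_zero_of_expC_mul_div_pow_eq_zero hker hπ0 hθ1 hzm ?_
    rw [← eq_expC_of_tendsto_coeff_ftPartial hθ0 (hft z m), hftz, map_zero]
  · rintro rfl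
    have hft0 : ft 0 = 0 := by
      ext m
      have h := hft 0 m
      simp only [ftPartial_zero (by omega : q ≠ 0), map_zero] at h
      exact (tendsto_const_nhds_iff.mp h).symm
    rw [hft0, mul_zero]

/-- for `z ∈ ℂ∞`, `χ_t(z) = ω(t)⁻¹ f_t(z)` vanishes iff `z = 0`. -/
theorem statement15
    (Fq : Type*) [Field Fq] [Fintype Fq]
    (Cinf : Type*) [NormedField Cinf] [CompleteSpace Cinf] [IsAlgClosed Cinf]
    [IsUltrametricDist Cinf] [Algebra Fq Cinf] (θ : Cinf)
    (q : ℕ) (hq : q = Fintype.card Fq) (hθ : ‖θ‖ = (q : ℝ))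
    (π : Cinf) (hπ : ‖π‖ = (q : ℝ) ^ ((q : ℝ) / ((q : ℝ) - 1)))
    (hker : ∀ z : Cinf, expC Cinf θ q z = 0 ↔ ∃ a : Polynomial Fq, z = π * aeval θ a)
    (lam : Cinf) (hlam : lam ^ (q - 1) = -θ)
    (ω : PowerSeries Cinf)
    (hω : ∀ m : ℕ,
      Tendsto
        (fun N : ℕ => PowerSeries.coeff (R := Cinf) m
          (PowerSeries.C (R := Cinf) lam *
            ∏ i ∈ Finset.range N,
              (1 - PowerSeries.C (R := Cinf) ((θ ^ q ^ i)⁻¹) * PowerSeries.X)⁻¹))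
        atTop (nhds (PowerSeries.coeff (R := Cinf) m ω)))
    (ft : Cinf → PowerSeries Cinf)
    (hft : ∀ (z : Cinf) (m : ℕ),
      Tendsto (fun N : ℕ => PowerSeries.coeff (R := Cinf) m (ftPartial Cinf θ π q z N))
        atTop (nhds (PowerSeries.coeff (R := Cinf) m (ft z)))) :
    ∀ z : Cinf, ω⁻¹ * ft z = 0 ↔ z = 0 :=
  statement15_general Fq Cinf θ q hq hθ π hπ hker lam hlam ω hω ft hft
end
end
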